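/- (Requirement model conservation.) Let f be the output of TransformCtoT on a multilevel clustering with local buses over finite index sets I (plants) and J (requirements), initially invoked with the full requirement index set J at the root and empty requirement sets at all other nodes. Then at every stage of the traversal the requirement sets carried by the nodes are pairwise disjoint and their union over all nodes equals J, and in the final output tree every requirement index j ∈ J belongs to the requirement set of exactly one node's synthesis subproblem. -/

import Mathlib

attribute [local instance] Classical.propDecidable

/-- A multilevel clustering with local buses: each node carries an element set `A`
(indices of plant components), a list `B` of bus children, a list `M` of non-bus
children, and a requirement index set `R`. -/
inductive MLC (I J : Type) : Type where
  | mk : Finset I → List (MLC I J) → List (MLC I J) → Finset J → MLC I J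

namespace MLC

variable {I J : Type}

/-- The element set `A(n)` of a node. -/
def elems : MLC I J → Finset I | mk A _ _ _ => A
/-- The bus children `B(n)` of a node. -/
def busCh : MLC I J → List (MLC I J) | mk _ B _ _ => B
/-- The non-bus children `M(n)` of a node. -/
def nonbusCh : MLC I J → List (MLC I J) | mk _ _ M _ => M
/-- The requirement index set `R(n)` of a node. -/
def reqs : MLC I J → Finset J | mk _ _ _ R => R
/-- All children `B(n) ∪ M(n)` of a node. -/
def children (t : MLC I J) : List (MLC I J) := t.busCh ++ t.nonbusCh
/-- Replace the requirement set carried by a node. -/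
def setReqs : MLC I J → Finset J → MLC I J | mk A B M _, R' => mk A B M R'

/-- Well-formedness of a multilevel clustering with local buses: a leaf has a
singleton element set and no children; an internal node has at least two children,
whose element sets are nonempty, pairwise disjoint and whose union is the node's
element set. -/
inductive WF : MLC I J → Prop where
  | leaf : ∀ (A : Finset I) (R : Finset J), A.card = 1 → WF (mk A [] [] R)
  | node : ∀ (A : Finset I) (B M : List (MLC I J)) (R : Finset J),
      2 ≤ (B ++ M).length →
      (∀ c ∈ B ++ M, (elems c).Nonempty) →
      (B ++ M).Pairwise (fun c d => Disjoint (elems c) (elems d)) →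
      ((B ++ M).map elems).foldr (· ∪ ·) ∅ = A →
      (∀ c ∈ B ++ M, WF c) →
      WF (mk A B M R)

end MLC

variable {I J : Type}

/-- Requirement `r` is related to cluster `c`: some plant index in the element set of
`c` is involved in `r` according to the domain mapping matrix `PR`. -/
def rel (PR : I → J → Prop) (r : J) (c : MLC I J) : Prop := ∃ p ∈ c.elems, PR p r

/-- The sublist of clusters of `cs` related to requirement `r`. -/
noncomputable def relF (PR : I → J → Prop) (r : J) (cs : List (MLC I J)) :
    List (MLC I J) :=
  cs.filter fun c => decide (rel PR r c)

/-- The requirements of `R` that stay at a node with bus children `B` and non-bus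
children `M`: those for which neither exactly one non-bus child is related, nor
(no non-bus child and exactly one bus child is related). -/
noncomputable def stayReqs (PR : I → J → Prop) (B M : List (MLC I J)) (R : Finset J) :
    Finset J :=
  R.filter fun r =>
    ¬ (relF PR r M).length = 1 ∧ ¬ ((relF PR r M) = [] ∧ (relF PR r B).length = 1)

/-- The requirements of `R` moved by PropReq into the non-bus child `c`:
`c` is the unique related non-bus cluster. -/
noncomputable def toNonbus (PR : I → J → Prop) (M : List (MLC I J)) (R : Finset J)
    (c : MLC I J) : Finset J :=
  R.filter fun r => relF PR r M = [c]

/-- The requirements of `R` moved by PropReq into the bus child `c`: no non-bus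
cluster is related and `c` is the unique related bus cluster. -/
noncomputable def toBus (PR : I → J → Prop) (B M : List (MLC I J)) (R : Finset J)
    (c : MLC I J) : Finset J :=
  R.filter fun r => relF PR r M = [] ∧ relF PR r B = [c]

/-- All plant indices involved in some requirement of `R`. -/
noncomputable def involved (PR : I → J → Prop) [Fintype I] (R : Finset J) : Finset I :=
  Finset.univ.filter fun i => ∃ r ∈ R, PR i r

/-- The subroutine PropReq: distributes the requirements of a node over the node
itself and its bus and non-bus children, and returns (as second component) the
accumulator set `P` of all plant indices involved in the requirements that remain. -/
noncomputable def propReq (PR : I → J → Prop) [Fintype I] :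
    MLC I J → MLC I J × Finset I
  | .mk A B M R =>
    (.mk A (B.map fun c => c.setReqs (c.reqs ∪ toBus PR B M R c))
           (M.map fun c => c.setReqs (c.reqs ∪ toNonbus PR M R c))
           (stayReqs PR B M R),
     involved PR (stayReqs PR B M R))

/-- The output tree of TransformCtoT: each node carries the element set of the
corresponding cluster together with its synthesis subproblem, i.e. a set of plant
indices and a set of requirement indices. -/
inductive SPTree (I J : Type) : Type where
  | mk : Finset I → Finset I → Finset J → List (SPTree I J) → SPTree I J

namespace SPTree

/-- Element set of the cluster corresponding to an output node. -/
def elemsS : SPTree I J → Finset I | mk A _ _ _ => A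
/-- Plant index set of the synthesis subproblem of an output node. -/
def plants : SPTree I J → Finset I | mk _ P _ _ => P
/-- Requirement index set of the synthesis subproblem of an output node. -/
def sreqs : SPTree I J → Finset J | mk _ _ R _ => R
/-- Children of an output node. -/
def chs : SPTree I J → List (SPTree I J) | mk _ _ _ cs => cs

end SPTree

/-- TransformCtoT (with the requirements pushed down by the parent passed as the
extra argument `Rin`): at a leaf it outputs the subproblem consisting of the leaf's
element together with all plants involved in its requirements; at an internal node
it performs PropReq, keeps the remaining requirements together with the plants they
involve, and recursively processes every bus child and every non-bus child with the
requirement sets moved into them. -/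
noncomputable def transform (PR : I → J → Prop) [Fintype I] :
    MLC I J → Finset J → SPTree I J
  | .mk A B M R, Rin =>
    if B ++ M = [] then
      SPTree.mk A (A ∪ involved PR (R ∪ Rin)) (R ∪ Rin) []
    else
      SPTree.mk A (involved PR (stayReqs PR B M (R ∪ Rin)))
        (stayReqs PR B M (R ∪ Rin))
        ((B.attach.map fun ⟨c, _hc⟩ => transform PR c (toBus PR B M (R ∪ Rin) c)) ++
         (M.attach.map fun ⟨c, _hc⟩ => transform PR c (toNonbus PR M (R ∪ Rin) c)))

mutual
/-- Number of occurrences of requirement index `j` among the requirement sets of the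
nodes of a multilevel clustering. -/
noncomputable def reqCountM (j : J) : MLC I J → ℕ
  | .mk _ B M R => (if j ∈ R then 1 else 0) + reqCountL j B + reqCountL j M
noncomputable def reqCountL (j : J) : List (MLC I J) → ℕ
  | [] => 0
  | c :: cs => reqCountM j c + reqCountL j cs
end

mutual
/-- Number of occurrences of requirement index `j` among the requirement sets of the
synthesis subproblems of the nodes of an output tree. -/
noncomputable def reqCountS (j : J) : SPTree I J → ℕ
  | .mk _ _ R cs => (if j ∈ R then 1 else 0) + reqCountSL j cs
noncomputable def reqCountSL (j : J) : List (SPTree I J) → ℕ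
  | [] => 0
  | c :: cs => reqCountS j c + reqCountSL j cs
end

mutual
/-- The list of all nodes of an output tree. -/
def allNodes : SPTree I J → List (SPTree I J)
  | .mk A P R cs => .mk A P R cs :: allNodesL cs
def allNodesL : List (SPTree I J) → List (SPTree I J)
  | [] => []
  | c :: cs => allNodes c ++ allNodesL cs
end

mutual
/-- All requirement sets in a multilevel clustering are empty. -/
def allReqsEmpty : MLC I J → Prop
  | .mk _ B M R => R = ∅ ∧ allReqsEmptyL B ∧ allReqsEmptyL M
def allReqsEmptyL : List (MLC I J) → Prop
  | [] => True
  | c :: cs => allReqsEmpty c ∧ allReqsEmptyL cs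
end

mutual
/-- The list of leaves of a multilevel clustering. -/
def leaves : MLC I J → List (MLC I J)
  | .mk A [] [] R => [.mk A [] [] R]
  | .mk _ B M _ => leavesL B ++ leavesL M
def leavesL : List (MLC I J) → List (MLC I J)
  | [] => []
  | c :: cs => leaves c ++ leavesL cs
end

/-- `callRel u v` holds iff, when TransformCtoT is run on the (well-formed) internal
node `v`, it performs a recursive call on `u`, i.e. `u` is one of the bus or non-bus
children of `v` with an updated requirement set. -/
def callRel (u v : MLC I J) : Prop :=
  MLC.WF v ∧ v.children ≠ [] ∧ ∃ c ∈ v.children, ∃ R' : Finset J, u = c.setReqs R'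

/-!
Every call of `transform` on a node `mk A B M R` with incoming set `Rin` works on
`R ∪ Rin`, and PropReq sends each requirement of this set to exactly one place: the node
itself, a single bus child, or a single non-bus child, according to whether there is
exactly one related non-bus child, or none and exactly one related bus child, or neither.
Hence, as long as each requirement is carried at most once in the subtree together with
`Rin` (otherwise the union would merge two copies), the number of occurrences of a
requirement is preserved by induction on the tree.
-/

theorem List.sum_map_ite_eq_count {α : Type} [DecidableEq α] (L : List α) (a : α) :
    (L.map fun x => if a = x then 1 else 0).sum = L.count a := by
  induction L with
  | nil => rfl
  | cons x L ih =>
    simp only [List.map_cons, List.sum_cons, ih, List.count_cons, beq_iff_eq]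
    by_cases h : a = x <;> simp [h, Ne.symm, add_comm]

theorem List.sum_map_ite_filter_eq_singleton {α : Type} [DecidableEq α] (p : α → Bool)
    (L : List α) :
    (L.map fun c => if L.filter p = [c] then 1 else 0).sum =
      if (L.filter p).length = 1 then 1 else 0 := by
  split_ifs with h
  · obtain ⟨c, hc⟩ := List.length_eq_one_iff.mp h
    have hpc : p c := (List.mem_filter.mp (hc ▸ List.mem_singleton_self c)).2
    simp only [hc, List.cons.injEq, and_true]
    rw [List.sum_map_ite_eq_count, ← List.count_filter hpc, hc, List.count_singleton_self]
  · refine List.sum_eq_zero fun n hn => ?_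
    obtain ⟨c, -, rfl⟩ := List.mem_map.mp hn
    exact if_neg fun hc => h (by rw [hc, List.length_singleton])

section PropReq

variable (PR : I → J → Prop) (B M : List (MLC I J)) (R : Finset J)

theorem sum_ite_mem_toNonbus {j : J} (hj : j ∈ R) :
    (M.map fun c => if j ∈ toNonbus PR M R c then 1 else 0).sum =
      if (relF PR j M).length = 1 then 1 else 0 := by
  simp only [toNonbus, Finset.mem_filter, hj, true_and]
  exact List.sum_map_ite_filter_eq_singleton _ M

theorem sum_ite_mem_toBus {j : J} (hj : j ∈ R) :
    (B.map fun c => if j ∈ toBus PR B M R c then 1 else 0).sum =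
      if relF PR j M = [] ∧ (relF PR j B).length = 1 then 1 else 0 := by
  by_cases hM : relF PR j M = []
  · simp only [toBus, Finset.mem_filter, hj, hM, true_and]
    exact List.sum_map_ite_filter_eq_singleton _ B
  · simp [toBus, hM]

theorem propReq_partition (j : J) :
    (if j ∈ stayReqs PR B M R then 1 else 0)
        + (B.map fun c => if j ∈ toBus PR B M R c then 1 else 0).sum
        + (M.map fun c => if j ∈ toNonbus PR M R c then 1 else 0).sum =
      if j ∈ R then 1 else 0 := by
  by_cases hj : j ∈ R
  · rw [sum_ite_mem_toBus PR B M R hj, sum_ite_mem_toNonbus PR M R hj, if_pos hj]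
    simp only [stayReqs, Finset.mem_filter, hj, true_and]
    by_cases hM : relF PR j M = [] <;> split_ifs <;> simp_all
  · simp [hj, stayReqs, toBus, toNonbus]

end PropReq

theorem MLC.induction_on_children {motive : MLC I J → Prop}
    (mk : ∀ A B M R, (∀ c ∈ B ++ M, motive c) → motive (.mk A B M R)) :
    ∀ s, motive s
  | .mk A B M R => mk A B M R fun c _ => MLC.induction_on_children mk c
termination_by s => sizeOf s
decreasing_by
  simp only [MLC.mk.sizeOf_spec]
  rcases List.mem_append.mp ‹c ∈ B ++ M› with hc | hc <;>
    · have := List.sizeOf_lt_of_mem hc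
      omega

section Counting

variable (j : J)

theorem reqCountL_eq_sum (L : List (MLC I J)) :
    reqCountL j L = (L.map (reqCountM j)).sum := by
  induction L with
  | nil => rfl
  | cons c L ih => simp only [reqCountL, ih, List.map_cons, List.sum_cons]

theorem reqCountSL_eq_sum (L : List (SPTree I J)) :
    reqCountSL j L = (L.map (reqCountS j)).sum := by
  induction L with
  | nil => rfl
  | cons c L ih => simp only [reqCountSL, ih, List.map_cons, List.sum_cons]

theorem reqCountL_append (L L' : List (MLC I J)) :
    reqCountL j (L ++ L') = reqCountL j L + reqCountL j L' := by
  simp only [reqCountL_eq_sum, List.map_append, List.sum_append]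

theorem reqCountM_le_reqCountL {c : MLC I J} {L : List (MLC I J)} (hc : c ∈ L) :
    reqCountM j c ≤ reqCountL j L :=
  reqCountL_eq_sum j L ▸ List.le_sum_of_mem (List.mem_map_of_mem hc)

mutual
theorem reqCountM_eq_zero_of_allReqsEmpty : ∀ {s : MLC I J}, allReqsEmpty s → reqCountM j s = 0
  | .mk _ _ _ _, ⟨hR, hB, hM⟩ => by
    simp [reqCountM, hR, reqCountL_eq_zero_of_allReqsEmptyL hB,
      reqCountL_eq_zero_of_allReqsEmptyL hM]
theorem reqCountL_eq_zero_of_allReqsEmptyL :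
    ∀ {L : List (MLC I J)}, allReqsEmptyL L → reqCountL j L = 0
  | [], _ => rfl
  | _ :: _, ⟨hc, hL⟩ => by
    simp [reqCountL, reqCountM_eq_zero_of_allReqsEmpty hc,
      reqCountL_eq_zero_of_allReqsEmptyL hL]
end

end Counting

section Transform

variable (PR : I → J → Prop) [Fintype I]

theorem transform_leaf (A : Finset I) (R Rin : Finset J) :
    transform PR (.mk A [] [] R) Rin = .mk A (A ∪ involved PR (R ∪ Rin)) (R ∪ Rin) [] := by
  rw [transform]; simp

theorem reqCountS_transform_node (j : J) (A : Finset I) (B M : List (MLC I J))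
    (R Rin : Finset J) (h : B ++ M ≠ []) :
    reqCountS j (transform PR (.mk A B M R) Rin) =
      (if j ∈ stayReqs PR B M (R ∪ Rin) then 1 else 0)
        + (B.map fun c => reqCountS j (transform PR c (toBus PR B M (R ∪ Rin) c))).sum
        + (M.map fun c => reqCountS j (transform PR c (toNonbus PR M (R ∪ Rin) c))).sum := by
  rw [transform, if_neg h]
  simp [reqCountS, reqCountSL_eq_sum, Function.comp_def, add_assoc]

theorem reqCountS_transform (s : MLC I J) (Rin : Finset J) (j : J)
    (h : reqCountM j s + (if j ∈ Rin then 1 else 0) ≤ 1) :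
    reqCountS j (transform PR s Rin) = reqCountM j s + (if j ∈ Rin then 1 else 0) := by
  induction s using MLC.induction_on_children generalizing Rin with
  | mk A B M R ih =>
    simp only [reqCountM] at h ⊢
    have hunion : (if j ∈ R ∪ Rin then 1 else 0) =
        (if j ∈ R then 1 else 0) + (if j ∈ Rin then 1 else 0) := by
      simp only [Finset.mem_union]
      split_ifs <;> simp_all
    by_cases hleaf : B ++ M = []
    · obtain ⟨rfl, rfl⟩ := List.append_eq_nil_iff.mp hleaf
      simp only [transform_leaf, reqCountS, reqCountSL, reqCountL, hunion]
      omega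
    · have hchild : ∀ c ∈ B ++ M, ∀ S ⊆ R ∪ Rin,
          reqCountS j (transform PR c S) = reqCountM j c + (if j ∈ S then 1 else 0) := by
        intro c hc S hS
        refine ih c hc S ?_
        have hc_le := reqCountM_le_reqCountL j hc
        have hS_le : (if j ∈ S then 1 else 0) ≤ if j ∈ R ∪ Rin then 1 else 0 := by
          by_cases hjS : j ∈ S
          · simp [hjS, hS hjS]
          · simp [hjS]
        rw [reqCountL_append] at hc_le
        omega
      rw [reqCountS_transform_node PR j A B M R Rin hleaf,
        List.map_congr_left fun c hc =>
          hchild c (List.mem_append_left M hc) (toBus PR B M _ c) (Finset.filter_subset _ _),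
        List.map_congr_left fun c hc =>
          hchild c (List.mem_append_right B hc) (toNonbus PR M _ c) (Finset.filter_subset _ _),
        List.sum_map_add, List.sum_map_add, ← reqCountL_eq_sum, ← reqCountL_eq_sum]
      have := propReq_partition PR B M (R ∪ Rin) j
      omega

end Transform

/-- Requirement model conservation: Let TransformCtoT be run on a
well-formed multilevel clustering with local buses, initially invoked with the full
requirement index set `J` at the root and empty requirement sets at all other nodes.
Then at every stage of the traversal (i.e. for every recursive call on a subtree `s`
with incoming requirement set `Rin`, where the requirement sets carried by the nodes
of `s` together with `Rin` are pairwise disjoint) requirements are neither lost nor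
duplicated: each requirement occurs in the nodes of the resulting output tree exactly
as often as before. Consequently, in the final output tree every requirement index
`j ∈ J` belongs to the requirement set of exactly one node's synthesis subproblem. -/
theorem requirement_conservation {I J : Type} [Fintype I] [Fintype J]
    (PR : I → J → Prop) (t : MLC I J) (hwf : MLC.WF t)
    (hroot : t.reqs = (Finset.univ : Finset J))
    (hdesc : ∀ c ∈ t.children, allReqsEmpty c) :
    (∀ (s : MLC I J) (Rin : Finset J), MLC.WF s →
      (∀ j : J, reqCountM j s ≤ 1) → (∀ j ∈ Rin, reqCountM j s = 0) →
      ∀ j : J, reqCountS j (transform PR s Rin)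
        = reqCountM j s + (if j ∈ Rin then 1 else 0)) ∧
    (∀ j : J, reqCountS j (transform PR t ∅) = 1) := by
  refine ⟨fun s Rin _ hle hRin j => reqCountS_transform PR s Rin j ?_, fun j => ?_⟩
  · by_cases hj : j ∈ Rin
    · simp [hj, hRin j hj]
    · simpa [hj] using hle j
  obtain ⟨A, B, M, R⟩ := t
  have hdesc_zero : reqCountL j (B ++ M) = 0 := by
    rw [reqCountL_eq_sum, List.sum_eq_zero_iff, List.forall_mem_map]
    exact fun c hc => reqCountM_eq_zero_of_allReqsEmpty j (hdesc c hc)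
  have hcount : reqCountM j (MLC.mk A B M R) = 1 := by
    rw [reqCountL_append] at hdesc_zero
    simp only [MLC.reqs] at hroot
    simp only [reqCountM, hroot, Finset.mem_univ, if_true]
    omega
  simpa [hcount] using reqCountS_transform PR (.mk A B M R) ∅ j (by simp [hcount])
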